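/- The polynomial ring 𝒫_n decomposes as the direct sum 𝒫_n = ⊕_λ V*_λ, the sum ranging over all partitions λ with at most n parts; in particular, the interpolation nonsymmetric Macdonald polynomials {E*_μ : μ ∈ ℕ^n} form a K-basis of 𝒫_n. -/

import Mathlib

open MvPolynomial

noncomputable section
open scoped Classical

/-- The field `K = ℚ(q,t)`. -/
abbrev K : Type := FractionRing (MvPolynomial (Fin 2) ℚ)

/-- The indeterminate `q` as an element of `K`. -/
def qq : K := algebraMap (MvPolynomial (Fin 2) ℚ) K (X 0)

/-- The indeterminate `t` as an element of `K`. -/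
def tt : K := algebraMap (MvPolynomial (Fin 2) ℚ) K (X 1)

/-- The size `|ν|` of a composition. -/
def csize {n : ℕ} (ν : Fin n → ℕ) : ℕ := ∑ i, ν i

/-- `k_i(ν) = #{j < i : ν_j > ν_i} + #{j > i : ν_j ≥ ν_i}`. -/
def kstat {n : ℕ} (ν : Fin n → ℕ) (i : Fin n) : ℕ :=
  Set.ncard {j : Fin n | j < i ∧ ν i < ν j} + Set.ncard {j : Fin n | i < j ∧ ν i ≤ ν j}

/-- The evaluation point `ν̃ = (q^{ν_i} t^{-k_i(ν)})_i`. -/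
def evalPt {n : ℕ} (ν : Fin n → ℕ) : Fin n → K :=
  fun i => qq ^ ν i * tt ^ (-(kstat ν i : ℤ))

/-- Weakly decreasing composition. -/
def IsPartition {n : ℕ} (l : Fin n → ℕ) : Prop := ∀ i j : Fin n, i ≤ j → l j ≤ l i

/-- The action `σ·μ := μ ∘ σ⁻¹`. -/
def permAct {n : ℕ} (σ : Equiv.Perm (Fin n)) (μ : Fin n → ℕ) : Fin n → ℕ := μ ∘ ⇑σ.symm

/-- `S_n(λ)`: the rearrangements of `λ`. -/
def Sn {n : ℕ} (l : Fin n → ℕ) : Set (Fin n → ℕ) :=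
  {μ | ∃ σ : Equiv.Perm (Fin n), permAct σ l = μ}

/-- The rearrangements of `λ` as a `Finset`. -/
def SnFinset {n : ℕ} (l : Fin n → ℕ) : Finset (Fin n → ℕ) :=
  Finset.image (fun σ : Equiv.Perm (Fin n) => permAct σ l) Finset.univ

/-- The exponent `Finsupp` of the monomial `x^μ`. -/
def expOf {n : ℕ} (μ : Fin n → ℕ) : Fin n →₀ ℕ := Finsupp.equivFunOnFinite.symm μ

/-- Characterization of the interpolation nonsymmetric Macdonald polynomial `E*_μ`. -/
def IsEstar {n : ℕ} (μ : Fin n → ℕ) (f : MvPolynomial (Fin n) K) : Prop :=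
  f.totalDegree ≤ csize μ ∧ coeff (expOf μ) f = 1 ∧
    ∀ ν : Fin n → ℕ, csize ν ≤ csize μ → ν ≠ μ → eval (evalPt ν) f = 0

/-- The interpolation nonsymmetric Macdonald polynomial `E*_μ` (unique by Knop–Sahi). -/
def Estar {n : ℕ} (μ : Fin n → ℕ) : MvPolynomial (Fin n) K :=
  if h : ∃ f, IsEstar μ f then h.choose else 0

/-- Characterization of the interpolation (symmetric) Macdonald polynomial `P*_λ`. -/
def IsPstar {n : ℕ} (l : Fin n → ℕ) (f : MvPolynomial (Fin n) K) : Prop :=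
  f.IsSymmetric ∧ f.totalDegree ≤ csize l ∧ coeff (expOf l) f = 1 ∧
    ∀ ν : Fin n → ℕ, IsPartition ν → csize ν ≤ csize l → ν ≠ l → eval (evalPt ν) f = 0

/-- The interpolation Macdonald polynomial `P*_λ`. -/
def Pstar {n : ℕ} (l : Fin n → ℕ) : MvPolynomial (Fin n) K :=
  if h : ∃ f, IsPstar l f then h.choose else 0

/-- The space `V*_λ`. -/
def Vstar {n : ℕ} (l : Fin n → ℕ) : Submodule K (MvPolynomial (Fin n) K) :=
  (restrictTotalDegree (Fin n) K (csize l)) ⊓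
    ⨅ (ν : Fin n → ℕ) (_ : csize ν ≤ csize l ∧ ν ∉ Sn l),
      LinearMap.ker (aeval (R := K) (evalPt ν)).toLinearMap

/-- Exchange of the variables `x_i` and `x_j` in a polynomial. -/
def swapVars {n : ℕ} (i j : Fin n) (f : MvPolynomial (Fin n) K) : MvPolynomial (Fin n) K :=
  rename (Equiv.swap i j) f

/-- Exact division of polynomials: the unique `g` with `a = b * g` when it exists. -/
def exactDiv {n : ℕ} (a b : MvPolynomial (Fin n) K) : MvPolynomial (Fin n) K :=
  if h : ∃ g, a = b * g then h.choose else 0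

/-- The Hecke operator
`T f = t f − ((t x_i − x_j)/(x_i − x_j))·(f − s_i f)` (where `j = i+1`). -/
def hecke {n : ℕ} (i j : Fin n) (f : MvPolynomial (Fin n) K) : MvPolynomial (Fin n) K :=
  C tt * f - (C tt * X i - X j) * exactDiv (f - swapVars i j f) (X i - X j)

/-- The Coxeter length of a permutation (number of inversions). -/
def permLength {n : ℕ} (σ : Equiv.Perm (Fin n)) : ℕ :=
  Set.ncard {p : Fin n × Fin n | p.1 < p.2 ∧ σ p.2 < σ p.1}

/-- The adjacent transposition `s_i = (i, i+1)` (0-indexed). -/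
def adjSwap {n : ℕ} (i : {i : ℕ // i + 1 < n}) : Equiv.Perm (Fin n) :=
  Equiv.swap ⟨i.1, Nat.lt_of_succ_lt i.2⟩ ⟨i.1 + 1, i.2⟩

/-- The Hecke operator `T_i` for an adjacent transposition index. -/
def heckeAt {n : ℕ} (i : {i : ℕ // i + 1 < n}) :
    MvPolynomial (Fin n) K → MvPolynomial (Fin n) K :=
  hecke ⟨i.1, Nat.lt_of_succ_lt i.2⟩ ⟨i.1 + 1, i.2⟩

/-- `T_{i_1} ⋯ T_{i_ℓ} f` for a word `w = [i_1, …, i_ℓ]`. -/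
def Tword {n : ℕ} (w : List {i : ℕ // i + 1 < n}) (f : MvPolynomial (Fin n) K) :
    MvPolynomial (Fin n) K :=
  w.foldr heckeAt f

/-- `w` is a reduced word for `σ`. -/
def IsReducedWordOf {n : ℕ} (w : List {i : ℕ // i + 1 < n}) (σ : Equiv.Perm (Fin n)) : Prop :=
  (w.map adjSwap).prod = σ ∧ w.length = permLength σ

/-- `T_σ`, computed from a reduced word of `σ` (independent of the choice, by the
Hecke algebra relations). -/
def Tsigma {n : ℕ} (σ : Equiv.Perm (Fin n)) :
    MvPolynomial (Fin n) K → MvPolynomial (Fin n) K :=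
  if h : ∃ w, IsReducedWordOf w σ then Tword h.choose else id

/-- `σ_μ`: the (unique) shortest permutation with `σ·l = μ`. -/
def sigmaMin {n : ℕ} (l μ : Fin n → ℕ) : Equiv.Perm (Fin n) :=
  if h : ∃ σ, permAct σ l = μ ∧ ∀ τ, permAct τ l = μ → permLength σ ≤ permLength τ then
    h.choose else 1

/-- The weakly decreasing rearrangement of a composition. -/
def sortDesc {n : ℕ} (μ : Fin n → ℕ) : Fin n → ℕ :=
  if h : ∃ l, IsPartition l ∧ μ ∈ Sn l then h.choose else μ

/-- The interpolation ASEP polynomial `f*_μ = T_{σ_μ} E*_λ`, where `λ` is the weakly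
decreasing rearrangement of `μ`. -/
def fstar {n : ℕ} (μ : Fin n → ℕ) : MvPolynomial (Fin n) K :=
  Tsigma (sigmaMin (sortDesc μ) μ) (Estar (sortDesc μ))

/-- The composition with entries `i` and `j` exchanged. -/
def swapEntries {n : ℕ} (i j : Fin n) (μ : Fin n → ℕ) : Fin n → ℕ := μ ∘ ⇑(Equiv.swap i j)

/-!
For a finite set `S` of compositions, the points `ν̃` (`ν ∈ S`) are unisolvent for the polynomials
spanned by the monomials `x ^ κ` (`κ ∈ S`). Interpolating on the compositions of size at most `|μ|`
produces `E*_μ` and shows `E*_μ (μ̃) ≠ 0`, so the `E*` are triangular for evaluation at the points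
`ν̃` ordered by size. Hence they are linearly independent, and by counting dimensions they span
each `{f | deg f ≤ d}`. Triangularity also shows that an element of `V*_λ` expands only in the
`E*_μ` with `μ ∈ S_n(λ)`, so `V*_λ` is spanned by those; as the orbits `S_n(λ)` partition `ℕ^n`,
the basis `E*` splits `𝒫_n` into the direct sum of the `V*_λ`.
-/

theorem LinearIndependent.isInternal_span_image {ι η R M : Type*} [DecidableEq η] [Ring R]
    [AddCommGroup M] [Module R M] {v : ι → M} (hli : LinearIndependent R v)
    (hspan : Submodule.span R (Set.range v) = ⊤) {s : η → Set ι}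
    (hdisj : Pairwise fun i j => Disjoint (s i) (s j)) (hcover : ⋃ j, s j = Set.univ) :
    DirectSum.IsInternal fun j => Submodule.span R (v '' s j) := by
  rw [DirectSum.isInternal_submodule_iff_iSupIndep_and_iSup_eq_top]
  refine ⟨fun j => ?_, ?_⟩
  · have hrest : ⨆ (k) (_ : k ≠ j), Submodule.span R (v '' s k)
        = Submodule.span R (v '' ⋃ (k) (_ : k ≠ j), s k) := by
      simp only [Set.image_iUnion₂, Submodule.span_iUnion₂]
    rw [hrest]
    exact hli.disjoint_span_image (Set.disjoint_iUnion₂_right.mpr fun k hk => hdisj hk.symm)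
  · rw [← Submodule.span_iUnion, ← Set.image_iUnion, hcover, Set.image_univ, hspan]

lemma two_mul_dotProduct_le {ι : Type*} [Fintype ι] (a b : ι → ℕ) :
    2 * (a ⬝ᵥ b) ≤ a ⬝ᵥ a + b ⬝ᵥ b := by
  simp only [dotProduct, Finset.mul_sum, ← Finset.sum_add_distrib]
  exact Finset.sum_le_sum fun i _ => by nlinarith [sq_nonneg ((a i : ℤ) - b i)]

lemma two_mul_dotProduct_lt {ι : Type*} [Fintype ι] {a b : ι → ℕ} (hab : a ≠ b) :
    2 * (a ⬝ᵥ b) < a ⬝ᵥ a + b ⬝ᵥ b := by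
  obtain ⟨i, hi⟩ := Function.ne_iff.mp hab
  simp only [dotProduct, Finset.mul_sum, ← Finset.sum_add_distrib]
  refine Finset.sum_lt_sum (fun j _ => by nlinarith [sq_nonneg ((a j : ℤ) - b j)])
    ⟨i, Finset.mem_univ i, ?_⟩
  rcases hi.lt_or_gt with h | h <;> nlinarith

lemma sum_dotProduct_comp_perm_lt {ι κ : Type*} [Fintype ι] [Fintype κ] {v : ι → κ → ℕ}
    (hv : Function.Injective v) {π : Equiv.Perm ι} (hπ : π ≠ 1) :
    ∑ i, v (π i) ⬝ᵥ v i < ∑ i, v i ⬝ᵥ v i := by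
  obtain ⟨i₀, hi₀⟩ : ∃ i, π i ≠ i := by
    by_contra! h
    exact hπ (Equiv.ext h)
  have key : 2 * ∑ i, v (π i) ⬝ᵥ v i < 2 * ∑ i, v i ⬝ᵥ v i :=
    calc 2 * ∑ i, v (π i) ⬝ᵥ v i = ∑ i, 2 * (v (π i) ⬝ᵥ v i) := Finset.mul_sum _ _ _
    _ < ∑ i, (v (π i) ⬝ᵥ v (π i) + v i ⬝ᵥ v i) :=
        Finset.sum_lt_sum (fun i _ => two_mul_dotProduct_le _ _)
          ⟨i₀, Finset.mem_univ i₀, two_mul_dotProduct_lt (hv.ne hi₀)⟩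
    _ = 2 * ∑ i, v i ⬝ᵥ v i := by
        rw [Finset.sum_add_distrib, Equiv.sum_comp π fun i => v i ⬝ᵥ v i]; ring
  omega

/-- The coefficient of the diagonal monomial in the determinant is `1`. -/
theorem Matrix.det_of_monomial_ne_zero {ι σ R : Type*} [Fintype ι] [DecidableEq ι] [CommRing R]
    [Nontrivial R] (w : ι → ι → σ →₀ ℕ)
    (hw : ∀ π : Equiv.Perm ι, π ≠ 1 → ∑ i, w (π i) i ≠ ∑ i, w i i) :
    (Matrix.of fun i j => (monomial (w i j) 1 : MvPolynomial σ R)).det ≠ 0 := by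
  have hcoeff : coeff (∑ i, w i i)
      (Matrix.of fun i j => (monomial (w i j) 1 : MvPolynomial σ R)).det = 1 := by
    rw [Matrix.det_apply, coeff_sum, Finset.sum_eq_single 1]
    · simp [← monomial_sum_one]
    · intro π _ hπ
      simp [← monomial_sum_one, coeff_monomial, hw π hπ]
    · simp
  intro h
  simp [h] at hcoeff

lemma tt_ne_zero : tt ≠ 0 :=
  (map_ne_zero_iff _ (IsFractionRing.injective _ K)).mpr (X_ne_zero 1)

section Interpolation

open scoped Matrix

variable {n : ℕ}

@[simp]
lemma coe_expOf (κ : Fin n → ℕ) : ⇑(expOf κ) = κ := rfl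

@[simp]
lemma expOf_coe (m : Fin n →₀ ℕ) : expOf ⇑m = m := Finsupp.equivFunOnFinite_symm_coe m

lemma expOf_injective : Function.Injective (expOf (n := n)) :=
  Finsupp.equivFunOnFinite.symm.injective

lemma csize_coe (m : Fin n →₀ ℕ) : csize ⇑m = m.sum fun _ e => e :=
  (Finsupp.sum_fintype m (fun _ e => e) fun _ => rfl).symm

lemma eval_evalPt_monomial (ν κ : Fin n → ℕ) :
    eval (evalPt ν) (monomial (expOf κ) 1) = qq ^ (ν ⬝ᵥ κ) * (tt ^ (kstat ν ⬝ᵥ κ))⁻¹ := by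
  rw [eval_monomial, Finsupp.prod_fintype _ _ fun _ => pow_zero _, one_mul]
  simp only [evalPt, zpow_neg, zpow_natCast, coe_expOf, mul_pow, ← pow_mul, inv_pow,
    Finset.prod_mul_distrib, Finset.prod_inv_distrib, Finset.prod_pow_eq_pow_sum, dotProduct]

def evalMatrix (S : Finset (Fin n → ℕ)) : Matrix S S K :=
  Matrix.of fun ν κ => eval (evalPt ν.1) (monomial (expOf κ.1) 1)

/-- Up to the factor `t ^ B`, the entries of `evalMatrix S` are the monomials
`q ^ (ν ⬝ᵥ κ) t ^ (B - k(ν) ⬝ᵥ κ)` of `ℚ[q, t]`, whose `q`-degrees make the diagonal term of the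
determinant dominant. -/
theorem det_evalMatrix_ne_zero (S : Finset (Fin n → ℕ)) : (evalMatrix S).det ≠ 0 := by
  obtain ⟨B, hB⟩ := Finite.exists_le fun p : S × S => kstat p.1.1 ⬝ᵥ p.2.1
  let w : S → S → Fin 2 →₀ ℕ := fun ν κ =>
    Finsupp.single 0 (ν.1 ⬝ᵥ κ.1) + Finsupp.single 1 (B - kstat ν.1 ⬝ᵥ κ.1)
  have hw : ∀ π : Equiv.Perm S, π ≠ 1 → ∑ i, w (π i) i ≠ ∑ i, w i i := fun π hπ h =>
    (sum_dotProduct_comp_perm_lt Subtype.coe_injective hπ).ne (by simpa [w] using congr($h 0))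
  have hmap : (algebraMap (MvPolynomial (Fin 2) ℚ) K).mapMatrix
      (Matrix.of fun ν κ => monomial (w ν κ) 1) = tt ^ B • evalMatrix S := by
    ext ν κ
    have hle : kstat ν.1 ⬝ᵥ κ.1 ≤ B := hB (ν, κ)
    have hmon : monomial (w ν κ) (1 : ℚ) =
        X 0 ^ (ν.1 ⬝ᵥ κ.1) * X 1 ^ (B - kstat ν.1 ⬝ᵥ κ.1) := by
      simp only [w, X_pow_eq_monomial, monomial_mul, one_mul]
    rw [RingHom.mapMatrix_apply, Matrix.map_apply, Matrix.of_apply, hmon, map_mul, map_pow,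
      map_pow, Matrix.smul_apply, evalMatrix, Matrix.of_apply, eval_evalPt_monomial,
      smul_eq_mul, ← qq, ← tt, pow_sub₀ _ tt_ne_zero hle]
    ring
  intro h
  apply Matrix.det_of_monomial_ne_zero (R := ℚ) w hw
  apply IsFractionRing.injective _ K
  rw [RingHom.map_det, hmap, Matrix.det_smul, h, mul_zero, map_zero]

lemma eq_sum_monomial_of_support_subset {R : Type*} [CommSemiring R] {S : Finset (Fin n → ℕ)}
    {f : MvPolynomial (Fin n) R} (hf : ∀ m ∈ f.support, ⇑m ∈ S) :
    f = ∑ κ : S, monomial (expOf κ.1) (coeff (expOf κ.1) f) := by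
  rw [Finset.sum_coe_sort S fun κ => monomial (expOf κ) (coeff (expOf κ) f),
    ← Finset.sum_image (f := fun m => monomial m (coeff m f)) fun κ _ κ' _ h =>
      expOf_injective h]
  conv_lhs => rw [f.as_sum]
  refine Finset.sum_subset (fun m hm => Finset.mem_image.mpr ⟨m, hf m hm, expOf_coe m⟩) ?_
  intro m _ hm
  rw [notMem_support_iff.mp hm, monomial_zero]

lemma eval_evalPt_sum_monomial (S : Finset (Fin n → ℕ)) (c : S → K) (ν : S) :
    eval (evalPt ν.1) (∑ κ : S, monomial (expOf κ.1) (c κ)) = (evalMatrix S *ᵥ c) ν := by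
  rw [map_sum, Matrix.mulVec, dotProduct]
  refine Finset.sum_congr rfl fun κ _ => ?_
  rw [evalMatrix, Matrix.of_apply, eval_monomial, eval_monomial, one_mul, mul_comm]

theorem eq_zero_of_eval_evalPt_eq_zero {S : Finset (Fin n → ℕ)} {f : MvPolynomial (Fin n) K}
    (hf : ∀ m ∈ f.support, ⇑m ∈ S) (hzero : ∀ ν ∈ S, eval (evalPt ν) f = 0) : f = 0 := by
  have hc : (fun κ : S => coeff (expOf κ.1) f) = 0 := by
    refine Matrix.eq_zero_of_mulVec_eq_zero (det_evalMatrix_ne_zero S) (funext fun ν => ?_)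
    rw [← eval_evalPt_sum_monomial, ← eq_sum_monomial_of_support_subset hf, hzero ν ν.2,
      Pi.zero_apply]
  rw [eq_sum_monomial_of_support_subset hf]
  simp [congrFun hc]

theorem exists_eval_evalPt_sum_monomial_eq (S : Finset (Fin n → ℕ)) (y : S → K) :
    ∃ c : S → K, ∀ ν : S, eval (evalPt ν.1) (∑ κ : S, monomial (expOf κ.1) (c κ)) = y ν := by
  obtain ⟨c, hc⟩ := Matrix.mulVec_surjective_iff_isUnit.mpr
    ((Matrix.isUnit_iff_isUnit_det _).mpr (det_evalMatrix_ne_zero S).isUnit) y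
  exact ⟨c, fun ν => by rw [eval_evalPt_sum_monomial, hc]⟩

def compositionsLE (n d : ℕ) : Finset (Fin n → ℕ) :=
  (Fintype.piFinset fun _ => Finset.range (d + 1)).filter fun κ => csize κ ≤ d

@[simp]
lemma mem_compositionsLE {d : ℕ} {κ : Fin n → ℕ} : κ ∈ compositionsLE n d ↔ csize κ ≤ d := by
  refine ⟨fun h => (Finset.mem_filter.mp h).2, fun h => Finset.mem_filter.mpr ⟨?_, h⟩⟩
  refine Fintype.mem_piFinset.mpr fun i => Finset.mem_range_succ_iff.mpr ?_
  exact (Finset.single_le_sum (fun j _ => Nat.zero_le (κ j)) (Finset.mem_univ i)).trans h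

lemma csize_le_totalDegree {R : Type*} [CommSemiring R] {f : MvPolynomial (Fin n) R}
    {m : Fin n →₀ ℕ} (hm : m ∈ f.support) : csize ⇑m ≤ f.totalDegree :=
  (csize_coe m).trans_le (le_totalDegree hm)

lemma monomial_expOf_mem_restrictTotalDegree {R : Type*} [CommSemiring R] {d : ℕ}
    {κ : Fin n → ℕ} (hκ : csize κ ≤ d) (c : R) :
    monomial (expOf κ) c ∈ restrictTotalDegree (Fin n) R d := by
  rw [restrictTotalDegree, monomial_mem_restrictSupport]
  exact Or.inl ((csize_coe (expOf κ)).symm.trans_le hκ)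

/-- `E*_μ` is `x ^ μ` minus the interpolant of `x ^ μ` on the other compositions of size at most
`|μ|`. -/
theorem exists_isEstar (μ : Fin n → ℕ) : ∃ f, IsEstar μ f := by
  set S := (compositionsLE n (csize μ)).erase μ
  obtain ⟨c, hc⟩ := exists_eval_evalPt_sum_monomial_eq S fun ν =>
    eval (evalPt ν.1) (monomial (expOf μ) 1)
  refine ⟨monomial (expOf μ) 1 - ∑ κ : S, monomial (expOf κ.1) (c κ), ?_, ?_, ?_⟩
  · refine (mem_restrictTotalDegree _ _ _).mp (Submodule.sub_mem _
      (monomial_expOf_mem_restrictTotalDegree le_rfl 1) (Submodule.sum_mem _ fun κ _ => ?_))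
    exact monomial_expOf_mem_restrictTotalDegree
      (mem_compositionsLE.mp (Finset.mem_of_mem_erase κ.2)) _
  · have hκ : ∀ κ : S, coeff (expOf μ) (monomial (expOf κ.1) (c κ)) = 0 := fun κ => by
      rw [coeff_monomial, if_neg fun h => Finset.ne_of_mem_erase κ.2 (expOf_injective h)]
    simp [coeff_sum, hκ]
  · intro ν hν hne
    rw [map_sub, hc ⟨ν, Finset.mem_erase.mpr ⟨hne, mem_compositionsLE.mpr hν⟩⟩, sub_self]

theorem isEstar_Estar (μ : Fin n → ℕ) : IsEstar μ (Estar μ) := by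
  rw [Estar, dif_pos (exists_isEstar μ)]
  exact (exists_isEstar μ).choose_spec

theorem eval_evalPt_Estar_self_ne_zero (μ : Fin n → ℕ) : eval (evalPt μ) (Estar μ) ≠ 0 := by
  obtain ⟨hdeg, hcoeff, hzero⟩ := isEstar_Estar μ
  intro hμ
  have hEstar : Estar μ = 0 := eq_zero_of_eval_evalPt_eq_zero (S := compositionsLE n (csize μ))
    (fun m hm => mem_compositionsLE.mpr ((csize_le_totalDegree hm).trans hdeg))
    (fun ν hν => if h : ν = μ then h ▸ hμ else hzero ν (mem_compositionsLE.mp hν) h)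
  simp [hEstar] at hcoeff

/-- Triangularity: `E*_κ (ν̃) = 0` whenever `|ν| ≤ |κ|` and `ν ≠ κ`, while `E*_ν (ν̃) ≠ 0`. -/
theorem eq_zero_of_eval_linearCombination_Estar_eq_zero {T : Set (Fin n → ℕ)}
    (hT : ∀ ν ∈ T, ∀ κ, csize κ < csize ν → κ ∈ T) {a : (Fin n → ℕ) →₀ K}
    (ha : ∀ ν ∈ T, eval (evalPt ν) (Finsupp.linearCombination K Estar a) = 0) :
    ∀ ν ∈ T, a ν = 0 := by
  intro ν
  induction hs : csize ν using Nat.strong_induction_on generalizing ν with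
  | _ s ih =>
  intro hν
  have hsum := ha ν hν
  rw [Finsupp.linearCombination_apply, Finsupp.sum, map_sum, Finset.sum_eq_single ν] at hsum
  · simpa [smul_eval, eval_evalPt_Estar_self_ne_zero] using hsum
  · intro κ _ hκν
    rcases lt_or_ge (csize κ) s with hlt | hle
    · rw [ih _ hlt κ rfl (hT ν hν κ (hs ▸ hlt)), zero_smul, map_zero]
    · rw [smul_eval, (isEstar_Estar κ).2.2 ν (hs ▸ hle) (Ne.symm hκν), mul_zero]
  · intro hν'
    rw [Finsupp.notMem_support_iff.mp hν', zero_smul, map_zero]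

theorem linearIndependent_Estar : LinearIndependent K (Estar (n := n)) :=
  linearIndependent_iff.mpr fun a ha => Finsupp.ext fun ν =>
    eq_zero_of_eval_linearCombination_Estar_eq_zero (T := Set.univ) (fun _ _ _ _ => trivial)
      (fun ν _ => by rw [ha, map_zero]) ν trivial

lemma finrank_restrictTotalDegree (d : ℕ) :
    Module.finrank K (restrictTotalDegree (Fin n) K d) = (compositionsLE n d).card := by
  rw [restrictTotalDegree, Module.finrank_eq_nat_card_basis (basisRestrictSupport K _),
    ← Nat.card_eq_finsetCard]
  exact Nat.card_congr (Finsupp.equivFunOnFinite.subtypeEquiv fun m => by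
    rw [mem_compositionsLE]
    exact iff_of_eq (congrArg (· ≤ d) (csize_coe m).symm))

theorem span_Estar_compositionsLE (d : ℕ) :
    Submodule.span K (Estar '' ↑(compositionsLE n d)) = restrictTotalDegree (Fin n) K d := by
  refine Submodule.eq_of_le_of_finrank_eq ?_ ?_
  · rw [Submodule.span_le]
    rintro _ ⟨μ, hμ, rfl⟩
    exact (mem_restrictTotalDegree _ _ _).mpr
      ((isEstar_Estar μ).1.trans (mem_compositionsLE.mp hμ))
  · rw [finrank_restrictTotalDegree, Set.image_eq_range,
      finrank_span_eq_card (b := fun μ : (compositionsLE n d : Set (Fin n → ℕ)) => Estar μ.1)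
        (linearIndependent_Estar.comp _ Subtype.val_injective)]
    simp

theorem span_range_Estar : Submodule.span K (Set.range (Estar (n := n))) = ⊤ := by
  refine eq_top_iff.mpr fun f _ => ?_
  have hf : f ∈ Submodule.span K (Estar '' ↑(compositionsLE n f.totalDegree)) := by
    rw [span_Estar_compositionsLE, mem_restrictTotalDegree]
  exact Submodule.span_mono (Set.image_subset_range _ _) hf

end Interpolation

section Rearrangements

variable {n : ℕ}

lemma csize_of_mem_Sn {l μ : Fin n → ℕ} (h : μ ∈ Sn l) : csize μ = csize l := by
  obtain ⟨σ, rfl⟩ := h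
  exact Equiv.sum_comp σ.symm l

lemma mem_Sn_of_mem_Sn_of_mem_Sn {l l' μ : Fin n → ℕ} (h : μ ∈ Sn l) (h' : μ ∈ Sn l') :
    l' ∈ Sn l := by
  obtain ⟨σ, rfl⟩ := h
  obtain ⟨τ, hτ⟩ := h'
  refine ⟨τ⁻¹ * σ, ?_⟩
  have hl' : l' = permAct τ l' ∘ τ := by
    funext i
    simp [permAct]
  rw [hl', hτ]
  funext i
  simp [permAct, Equiv.Perm.mul_def, Equiv.Perm.inv_def]

lemma eq_of_mem_Sn_of_isPartition {l l' : Fin n → ℕ} (hl : IsPartition l) (hl' : IsPartition l')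
    (h : l' ∈ Sn l) : l' = l := by
  obtain ⟨σ, rfl⟩ := h
  exact Tuple.unique_antitone (f := l) (σ := σ.symm) (τ := 1) hl' hl

lemma disjoint_Sn_of_isPartition {l l' : Fin n → ℕ} (hl : IsPartition l) (hl' : IsPartition l')
    (hne : l ≠ l') : Disjoint (Sn l) (Sn l') :=
  Set.disjoint_left.mpr fun _ h h' =>
    hne (eq_of_mem_Sn_of_isPartition hl hl' (mem_Sn_of_mem_Sn_of_mem_Sn h h')).symm

lemma exists_isPartition_mem_Sn (μ : Fin n → ℕ) : ∃ l, IsPartition l ∧ μ ∈ Sn l := by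
  let σ := Tuple.sort (OrderDual.toDual ∘ μ)
  refine ⟨μ ∘ σ, fun i j hij => Tuple.monotone_sort (OrderDual.toDual ∘ μ) hij, σ, ?_⟩
  funext i
  simp [permAct]

lemma iUnion_Sn_isPartition : ⋃ l : {l : Fin n → ℕ // IsPartition l}, Sn l.1 = Set.univ :=
  Set.eq_univ_of_forall fun μ =>
    let ⟨l, hl, hμ⟩ := exists_isPartition_mem_Sn μ
    Set.mem_iUnion.mpr ⟨⟨l, hl⟩, hμ⟩

end Rearrangements

section Vstar

variable {n : ℕ}

lemma mem_Vstar_iff {l : Fin n → ℕ} {f : MvPolynomial (Fin n) K} :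
    f ∈ Vstar l ↔ f.totalDegree ≤ csize l ∧
      ∀ ν, csize ν ≤ csize l → ν ∉ Sn l → eval (evalPt ν) f = 0 := by
  simp [Vstar, mem_restrictTotalDegree, Submodule.mem_iInf]

theorem Vstar_eq_span (l : Fin n → ℕ) : Vstar l = Submodule.span K (Estar '' Sn l) := by
  apply le_antisymm
  · intro f hf
    obtain ⟨hdeg, hzero⟩ := mem_Vstar_iff.mp hf
    have hspan : f ∈ Submodule.span K (Estar '' ↑(compositionsLE n (csize l))) := by
      rwa [span_Estar_compositionsLE, mem_restrictTotalDegree]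
    obtain ⟨a, ha, rfl⟩ := (Finsupp.mem_span_image_iff_linearCombination K).mp hspan
    refine (Finsupp.mem_span_image_iff_linearCombination K).mpr ⟨a, fun ν hν => ?_, rfl⟩
    by_contra hνS
    refine Finsupp.mem_support_iff.mp hν <|
      eq_zero_of_eval_linearCombination_Estar_eq_zero (T := {ν | csize ν ≤ csize l ∧ ν ∉ Sn l})
        ?_ (fun ν hν => hzero ν hν.1 hν.2) ν ⟨mem_compositionsLE.mp (ha hν), hνS⟩
    exact fun ν hν κ hκ =>
      ⟨hκ.le.trans hν.1, fun h => (csize_of_mem_Sn h ▸ hκ).not_ge hν.1⟩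
  · rw [Submodule.span_le]
    rintro _ ⟨μ, hμ, rfl⟩
    obtain ⟨hdeg, -, hzero⟩ := isEstar_Estar μ
    rw [csize_of_mem_Sn hμ] at hdeg hzero
    exact mem_Vstar_iff.mpr ⟨hdeg, fun ν hν hνS => hzero ν hν fun h => hνS (h ▸ hμ)⟩

end Vstar

theorem statement1_general (n : ℕ) :
    DirectSum.IsInternal (fun l : {l : Fin n → ℕ // IsPartition l} => Vstar l.1) ∧
    LinearIndependent K (fun μ : Fin n → ℕ => Estar μ) ∧
    Submodule.span K (Set.range (fun μ : Fin n → ℕ => Estar (n := n) μ)) = ⊤ := by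
  refine ⟨?_, linearIndependent_Estar, span_range_Estar⟩
  simp_rw [Vstar_eq_span]
  exact linearIndependent_Estar.isInternal_span_image span_range_Estar
    (fun l l' hne => disjoint_Sn_of_isPartition l.2 l'.2 (Subtype.coe_ne_coe.mpr hne))
    iUnion_Sn_isPartition

/-- `𝒫_n = ⊕_λ V*_λ`, and the `E*_μ` form a basis of `𝒫_n`. -/
theorem statement1 (n : ℕ) (hn : 1 ≤ n) :
    DirectSum.IsInternal (fun l : {l : Fin n → ℕ // IsPartition l} => Vstar l.1) ∧
    LinearIndependent K (fun μ : Fin n → ℕ => Estar μ) ∧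
    Submodule.span K (Set.range (fun μ : Fin n → ℕ => Estar (n := n) μ)) = ⊤ :=
  statement1_general n
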